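/- arXiv:2011.06986 — 6 statements merged into one kernel-verified Lean document; each statement's English description precedes it below -/
import Mathlib

section
/- Let P be an abelian group, s a positive real, and h : P → ℝ a function such that for all L₀, L₁, …, L_r ∈ P one has h(m₁L₁ + ⋯ + m_rL_r) = O(|m|^s) and h(L₀ + m₁L₁ + ⋯ + m_rL_r) − h(m₁L₁ + ⋯ + m_rL_r) = O(|m|^{s−1}) as |m| = Σ|m_i| → ∞ over m ∈ ℤ^r. Then the function ĥ : P → ℝ defined by ĥ(L) = limsup_{m→∞} m^{−s} h(mL) satisfies ĥ(aL) = a^s ĥ(L) for every natural number a and every L ∈ P. -/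
/-!
Put `f n = n^(-s) h(n • L)`. Then `ĥ(a • L) = a^s · limsup_m f(m a)`, so it suffices that the
limsup of `f` along the multiples of `a` is the full limsup. With `r = a ⌊n / a⌋`, the continuity
bound gives `h(n • L) - h(r • L) = O(n^(s-1))`, and the growth bound keeps `f` bounded, so
`f n - f r → 0`; and `n ↦ f r` runs through the values `f (m a)`, each repeated `a` times.
-/

open Filter Asymptotics Topology Finset

namespace Filter

variable {ι : Type*} {l : Filter ι} [l.NeBot] {u v : ι → ℝ}

theorem limsup_add_eq_of_tendsto_zero (hu : IsBoundedUnder (· ≤ ·) l fun i => |u i|)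
    (hv : Tendsto v l (𝓝 0)) : limsup (u + v) l = limsup u l := by
  obtain ⟨hu_le, hu_ge⟩ := isBoundedUnder_le_abs.1 hu
  apply le_antisymm
  · simpa [hv.limsup_eq] using limsup_add_le hu_ge hu_le hv.isBoundedUnder_ge.isCoboundedUnder_le
      hv.isBoundedUnder_le
  · simpa [hv.liminf_eq] using le_limsup_add hu_le hu_ge.isCoboundedUnder_le hv.isBoundedUnder_le
      hv.isBoundedUnder_ge

theorem limsup_const_mul_of_nonneg {c : ℝ} (hc : 0 ≤ c)
    (hu : IsBoundedUnder (· ≤ ·) l fun i => |u i|) :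
    limsup (fun i => c * u i) l = c * limsup u l := by
  obtain ⟨hu_le, hu_ge⟩ := isBoundedUnder_le_abs.1 hu
  exact ((monotone_mul_left_of_nonneg hc).map_limsup_of_continuousAt u
    (continuous_const_mul c).continuousAt hu_le hu_ge.isCoboundedUnder_le).symm

theorem limsup_comp_div_nat {α : Type*} [ConditionallyCompleteLattice α] (g : ℕ → α) {a : ℕ}
    (ha : 0 < a) : limsup (fun n => g (n / a)) atTop = limsup g atTop := by
  rw [← Function.comp_def, limsup_comp, map_div_atTop_eq_nat a ha]

end Filter

section

variable {u : ℕ → ℝ} {s : ℝ} {a : ℕ}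

theorem isBoundedUnder_abs_rpow_neg_mul (hu : u =O[atTop] fun n => (n : ℝ) ^ s) :
    IsBoundedUnder (· ≤ ·) atTop fun n : ℕ => |(n : ℝ) ^ (-s) * u n| := by
  refine (isBigO_one_iff ℝ).1 (((isBigO_refl _ _).mul hu).trans_eventuallyEq ?_)
  filter_upwards [eventually_gt_atTop 0] with n hn
  rw [← Real.rpow_add (by positivity), neg_add_cancel, Real.rpow_zero]

theorem isBigO_comp_div_mul_sub {g : ℕ → ℝ}
    (hu : ∀ j, (fun n => u (n - j) - u n) =O[atTop] g) (ha : 0 < a) :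
    (fun n => u (n / a * a) - u n) =O[atTop] g := by
  refine (isBigO_of_le (g := fun n => ∑ j ∈ range a, ‖u (n - j) - u n‖) _ fun n => ?_).trans
    (IsBigO.fun_sum fun j _ => (hu j).norm_left)
  rw [Real.norm_of_nonneg (sum_nonneg fun _ _ => norm_nonneg _)]
  have hr : n / a * a = n - n % a := by have := Nat.mod_add_div' n a; omega
  rw [hr]
  exact single_le_sum (f := fun j => ‖u (n - j) - u n‖) (fun _ _ => norm_nonneg _)
    (mem_range.2 (Nat.mod_lt n ha))

theorem tendsto_div_mul_atTop (ha : 0 < a) : Tendsto (fun n => n / a * a) atTop atTop :=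
  ((tendsto_id.atTop_mul_one_le fun _ => ha).comp (map_div_atTop_eq_nat a ha).le :)

theorem tendsto_div_mul_div_self (ha : 0 < a) :
    Tendsto (fun n : ℕ => ((n / a * a : ℕ) : ℝ) / n) atTop (𝓝 1) := by
  have hmod : Tendsto (fun n : ℕ => ((n % a : ℕ) : ℝ) / n) atTop (𝓝 0) :=
    squeeze_zero (fun n => by positivity)
      (fun n => div_le_div_of_nonneg_right (a := ((n % a : ℕ) : ℝ)) (b := a)
        (by exact_mod_cast (Nat.mod_lt n ha).le) n.cast_nonneg)
      (tendsto_const_div_atTop_nhds_zero_nat (a : ℝ))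
  refine (by simpa using tendsto_const_nhds.sub hmod :
    Tendsto (fun n : ℕ => 1 - ((n % a : ℕ) : ℝ) / n) atTop (𝓝 1)).congr' ?_
  filter_upwards [eventually_gt_atTop 0] with n hn
  have hn' : (n : ℝ) ≠ 0 := by positivity
  rw [eq_div_iff hn', sub_mul, div_mul_cancel₀ _ hn', one_mul, sub_eq_iff_eq_add']
  exact_mod_cast (Nat.mod_add_div' n a).symm

theorem tendsto_rpow_neg_mul_sub_comp_div_mul (hgrowth : u =O[atTop] fun n => (n : ℝ) ^ s)
    (hcont : ∀ j, (fun n => u (n - j) - u n) =O[atTop] fun n => (n : ℝ) ^ (s - 1))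
    (ha : 0 < a) :
    Tendsto (fun n : ℕ => (n : ℝ) ^ (-s) * u n - ((n / a * a : ℕ) : ℝ) ^ (-s) * u (n / a * a))
      atTop (𝓝 0) := by
  have hr := tendsto_div_mul_atTop ha
  have hinv : Tendsto (fun n : ℕ => (n : ℝ) ^ (-s) * (n : ℝ) ^ (s - 1)) atTop (𝓝 0) := by
    refine ((tendsto_rpow_neg_atTop one_pos).comp tendsto_natCast_atTop_atTop).congr' ?_
    filter_upwards [eventually_gt_atTop 0] with n hn
    rw [Function.comp_apply, ← Real.rpow_add (by positivity)]
    ring_nf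
  have hshift : Tendsto (fun n : ℕ => (n : ℝ) ^ (-s) * (u (n / a * a) - u n)) atTop (𝓝 0) :=
    ((isBigO_refl _ _).mul (isBigO_comp_div_mul_sub hcont ha)).trans_tendsto hinv
  have hrescale : Tendsto (fun n : ℕ => ((((n / a * a : ℕ) : ℝ) / n) ^ s - 1) *
      (((n / a * a : ℕ) : ℝ) ^ (-s) * u (n / a * a))) atTop (𝓝 0) := by
    refine Tendsto.zero_mul_isBoundedUnder_le ?_
      (hr.isBoundedUnder_comp (isBoundedUnder_abs_rpow_neg_mul hgrowth))
    simpa using ((tendsto_div_mul_div_self ha).rpow_const (Or.inl one_ne_zero)).sub_const 1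
  -- for `r = n / a * a`: `n^(-s) u n - r^(-s) u r = ((r/n)^s - 1) r^(-s) u r - n^(-s) (u r - u n)`
  refine (sub_zero (0 : ℝ) ▸ hrescale.sub hshift).congr' ?_
  filter_upwards [hr.eventually_gt_atTop 0, eventually_gt_atTop 0] with n hr0 hn0
  have hr0' : (0 : ℝ) < (n / a * a : ℕ) := by exact_mod_cast hr0
  have hn0' : (0 : ℝ) < n := by exact_mod_cast hn0
  rw [Real.div_rpow hr0'.le hn0'.le, Real.rpow_neg hr0'.le, Real.rpow_neg hn0'.le]
  field_simp
  ring

theorem limsup_rpow_neg_mul_comp_mul (hs : 0 < s) (hgrowth : u =O[atTop] fun n => (n : ℝ) ^ s)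
    (hcont : ∀ j, (fun n => u (n - j) - u n) =O[atTop] fun n => (n : ℝ) ^ (s - 1)) (a : ℕ) :
    limsup (fun m : ℕ => (m : ℝ) ^ (-s) * u (m * a)) atTop
      = (a : ℝ) ^ s * limsup (fun n : ℕ => (n : ℝ) ^ (-s) * u n) atTop := by
  rcases Nat.eq_zero_or_pos a with rfl | ha
  · simp only [mul_zero, Nat.cast_zero, Real.zero_rpow hs.ne', zero_mul]
    have hdecay := ((tendsto_rpow_neg_atTop hs).comp tendsto_natCast_atTop_atTop).mul_const (u 0)
    rw [zero_mul] at hdecay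
    exact hdecay.limsup_eq
  set f : ℕ → ℝ := fun n => (n : ℝ) ^ (-s) * u n with hf_def
  have hf := isBoundedUnder_abs_rpow_neg_mul hgrowth
  have hscale : ∀ m : ℕ, (m : ℝ) ^ (-s) * u (m * a) = (a : ℝ) ^ s * f (m * a) := fun m => by
    have ha_s : (0 : ℝ) < (a : ℝ) ^ s := by positivity
    simp only [hf_def, Nat.cast_mul]
    rw [Real.mul_rpow m.cast_nonneg a.cast_nonneg, Real.rpow_neg a.cast_nonneg]
    field_simp
  have hfloor : (fun n => f (n / a * a)) + (fun n => f n - f (n / a * a)) = f := by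
    funext n
    exact add_sub_cancel _ _
  calc limsup (fun m : ℕ => (m : ℝ) ^ (-s) * u (m * a)) atTop
      = (a : ℝ) ^ s * limsup (fun m => f (m * a)) atTop := by
        simp_rw [hscale]
        exact limsup_const_mul_of_nonneg (by positivity)
          ((tendsto_id.atTop_mul_one_le fun _ => ha).isBoundedUnder_comp hf)
    _ = (a : ℝ) ^ s * limsup (fun n => f (n / a * a)) atTop := by
        rw [limsup_comp_div_nat (fun m => f (m * a)) ha]
    _ = (a : ℝ) ^ s * limsup f atTop := by
        rw [← limsup_add_eq_of_tendsto_zero ((tendsto_div_mul_atTop ha).isBoundedUnder_comp hf)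
          (tendsto_rpow_neg_mul_sub_comp_div_mul hgrowth hcont ha), hfloor]

end

section

variable {P : Type*} [AddCommGroup P] {h : P → ℝ} {s : ℝ}

theorem isBigO_comp_nsmul_of_growth
    (hgrowth : ∀ (r : ℕ) (L : Fin r → P), ∃ C N : ℝ, ∀ m : Fin r → ℤ,
      N ≤ ∑ i, |(m i : ℝ)| → |h (∑ i, m i • L i)| ≤ C * (∑ i, |(m i : ℝ)|) ^ s) (L : P) :
    (fun n : ℕ => h (n • L)) =O[atTop] fun n => (n : ℝ) ^ s := by
  obtain ⟨C, N, hC⟩ := hgrowth 1 fun _ => L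
  refine IsBigO.of_bound C ?_
  filter_upwards [tendsto_natCast_atTop_atTop.eventually_ge_atTop N] with n hn
  simpa [abs_of_nonneg (Real.rpow_nonneg n.cast_nonneg s)] using hC (fun _ => n) (by simpa using hn)

theorem isBigO_comp_sub_nsmul_of_cont
    (hcont : ∀ (r : ℕ) (L₀ : P) (L : Fin r → P), ∃ C N : ℝ, ∀ m : Fin r → ℤ,
      N ≤ ∑ i, |(m i : ℝ)| →
        |h (L₀ + ∑ i, m i • L i) - h (∑ i, m i • L i)| ≤ C * (∑ i, |(m i : ℝ)|) ^ (s - 1))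
    (L : P) (j : ℕ) :
    (fun n : ℕ => h ((n - j) • L) - h (n • L)) =O[atTop] fun n => (n : ℝ) ^ (s - 1) := by
  obtain ⟨C, N, hC⟩ := hcont 1 (-(j • L)) fun _ => L
  refine IsBigO.of_bound C ?_
  filter_upwards [tendsto_natCast_atTop_atTop.eventually_ge_atTop N, eventually_ge_atTop j]
    with n hn hj
  rw [sub_nsmul L hj, add_comm (n • L)]
  simpa [abs_of_nonneg (Real.rpow_nonneg n.cast_nonneg (s - 1))] using
    hC (fun _ => n) (by simpa using hn)

end

/-- **Homogeneity of the asymptotic function** (first step of Theorem A.1).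
`P` is an abelian group, `s > 0` real, and `h : P → ℝ` satisfies, for every finite
tuple `L₀, L₁, …, L_r` of elements of `P`, the growth bound
`h(m₁L₁ + ⋯ + m_rL_r) = O(|m|^s)` and the continuity bound
`h(L₀ + m₁L₁ + ⋯ + m_rL_r) − h(m₁L₁ + ⋯ + m_rL_r) = O(|m|^{s−1})` as
`|m| = Σ|mᵢ| → ∞` over `m ∈ ℤ^r`.  Then `hhat(L) = limsup_{m→∞} m^{−s} h(mL)`
satisfies `hhat(aL) = a^s · hhat(L)` for every natural number `a` and every `L ∈ P`. -/
theorem stmt0 {P : Type*} [AddCommGroup P] (s : ℝ) (hs : 0 < s) (h : P → ℝ)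
    (hgrowth : ∀ (r : ℕ) (L : Fin r → P), ∃ C N : ℝ, ∀ m : Fin r → ℤ,
      N ≤ ∑ i, |(m i : ℝ)| →
        |h (∑ i, m i • L i)| ≤ C * (∑ i, |(m i : ℝ)|) ^ s)
    (hcont : ∀ (r : ℕ) (L₀ : P) (L : Fin r → P), ∃ C N : ℝ, ∀ m : Fin r → ℤ,
      N ≤ ∑ i, |(m i : ℝ)| →
        |h (L₀ + ∑ i, m i • L i) - h (∑ i, m i • L i)|
          ≤ C * (∑ i, |(m i : ℝ)|) ^ (s - 1))
    (hhat : P → ℝ)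
    (hdef : ∀ L : P,
      hhat L = Filter.limsup (fun m : ℕ => (m : ℝ) ^ (-s) * h (m • L)) Filter.atTop) :
    ∀ (a : ℕ) (L : P), hhat (a • L) = (a : ℝ) ^ s * hhat L := by
  intro a L
  simp only [hdef, smul_smul]
  exact limsup_rpow_neg_mul_comp_mul hs (isBigO_comp_nsmul_of_growth hgrowth L)
    (isBigO_comp_sub_nsmul_of_cont hcont L) a
end

section
/- Let P be an abelian group and h : P → ℝ such that for all L₀, L₁, …, L_r ∈ P there exists C > 0 with |h(m₁L₁ + ⋯ + m_rL_r + L_i) − h(m₁L₁ + ⋯ + m_rL_r)| ≤ C|m|^{s−1} for all m ∈ ℤ^r and i. Then for all L₁, …, L_r ∈ P there is C' > 0 such that |h(m₁L₁ + ⋯ + m_rL_r) − h(m'₁L₁ + ⋯ + m'_rL_r)| ≤ C'·|m − m'|·max(|m|,|m'|)^{s−1} for all m, m' ∈ ℤ^r. -/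
/-- **Multi-step perturbation bound** (Lemma A.2 / `lem:perturbation`).
`P` is an abelian group (written additively), `s ≥ 1` a real number, and `|·|`
the ℓ¹-norm on `ℤ^r`.  Assume that for all `L₁, …, L_r ∈ P` there is `C > 0`
with `|h(m₁L₁ + ⋯ + m_rL_r + L_i) − h(m₁L₁ + ⋯ + m_rL_r)| ≤ C|m|^{s−1}` for all
`m ∈ ℤ^r` and all `i`.  Then for all `L₁, …, L_r ∈ P` there is `C' > 0` with
`|h(m₁L₁ + ⋯ + m_rL_r) − h(m'₁L₁ + ⋯ + m'_rL_r)| ≤ C'·|m − m'|·max(|m|,|m'|)^{s−1}`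
for all `m, m' ∈ ℤ^r`. -/
theorem stmt1 {P : Type*} [AddCommGroup P] (s : ℝ) (hs : 1 ≤ s) (h : P → ℝ)
    (hyp : ∀ (r : ℕ) (L : Fin r → P), ∃ C > (0 : ℝ), ∀ (m : Fin r → ℤ) (i : Fin r),
      |h ((∑ j, m j • L j) + L i) - h (∑ j, m j • L j)|
        ≤ C * (∑ j, |(m j : ℝ)|) ^ (s - 1)) :
    ∀ (r : ℕ) (L : Fin r → P), ∃ C' > (0 : ℝ), ∀ m m' : Fin r → ℤ,
      |h (∑ j, m j • L j) - h (∑ j, m' j • L j)|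
        ≤ C' * (∑ j, |(m j : ℝ) - (m' j : ℝ)|) *
            (max (∑ j, |(m j : ℝ)|) (∑ j, |(m' j : ℝ)|)) ^ (s - 1) := by
  intro r L
  obtain ⟨C, hC, hstep⟩ := hyp r L
  have hs1 : (0:ℝ) ≤ s - 1 := by linarith
  refine ⟨C * 2 ^ (s - 1), by positivity, ?_⟩
  have key : ∀ N : ℕ, ∀ m m' : Fin r → ℤ, (∑ j, (m j - m' j).natAbs) = N →
      |h (∑ j, m j • L j) - h (∑ j, m' j • L j)|
        ≤ C * N * (∑ j, max |(m j : ℝ)| |(m' j : ℝ)|) ^ (s - 1) := by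
    intro N
    induction N with
    | zero =>
      intro m m' hN
      have : ∀ j, m j = m' j := by
        intro j
        have := (Finset.sum_eq_zero_iff.mp hN) j (Finset.mem_univ j)
        omega
      have : m = m' := funext this
      subst this
      simp
    | succ N ih =>
      intro m m' hN
      have hex : ∃ i, m i ≠ m' i := by
        by_contra hcon
        push_neg at hcon
        have : (∑ j, (m j - m' j).natAbs) = 0 := by
          apply Finset.sum_eq_zero
          intro j _
          have := hcon j
          omega
        omega
      obtain ⟨i, hi⟩ := hex
      set d : ℤ := if m' i < m i then 1 else -1 with hd
      set m'' : Fin r → ℤ := Function.update m' i (m' i + d) with hm''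
      have hm''i : m'' i = m' i + d := Function.update_self i _ m'
      have hm''j : ∀ j, j ≠ i → m'' j = m' j := fun j hj => Function.update_of_ne hj _ m'
      have habs : (m i - m'' i).natAbs + 1 = (m i - m' i).natAbs := by
        rw [hm''i]
        rcases lt_or_gt_of_ne hi with hlt | hgt
        · have hdv : d = -1 := by rw [hd, if_neg (by omega)]
          rw [hdv]; omega
        · have hdv : d = 1 := by rw [hd, if_pos hgt]
          rw [hdv]; omega
      have hNsum : (∑ j, (m j - m'' j).natAbs) = N := by
        have h1 := Finset.sum_erase_add Finset.univ (fun j => (m j - m'' j).natAbs)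
          (Finset.mem_univ i)
        have h2 := Finset.sum_erase_add Finset.univ (fun j => (m j - m' j).natAbs)
          (Finset.mem_univ i)
        have h3 : ∑ j ∈ Finset.univ.erase i, (m j - m'' j).natAbs
            = ∑ j ∈ Finset.univ.erase i, (m j - m' j).natAbs := by
          apply Finset.sum_congr rfl
          intro j hj
          rw [hm''j j (Finset.ne_of_mem_erase hj)]
        omega
      have hboxZ : ∀ j, (m'' j).natAbs ≤ max (m j).natAbs (m' j).natAbs := by
        intro j
        by_cases hj : j = i
        · rw [hj, hm''i]
          apply le_max_iff.mpr
          rcases lt_or_gt_of_ne hi with hlt | hgt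
          · have hdv : d = -1 := by rw [hd, if_neg (by omega)]
            rw [hdv]; omega
          · have hdv : d = 1 := by rw [hd, if_pos hgt]
            rw [hdv]; omega
        · rw [hm''j j hj]
          exact le_max_right _ _
      have hbox : ∀ j, |(m'' j : ℝ)| ≤ max |(m j : ℝ)| |(m' j : ℝ)| := by
        intro j
        have h1 : ((m'' j).natAbs : ℝ) ≤ ((max (m j).natAbs (m' j).natAbs : ℕ) : ℝ) :=
          Nat.cast_le.mpr (hboxZ j)
        rw [Nat.cast_max] at h1
        simpa [Nat.cast_natAbs, Int.cast_abs] using h1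
      set B : ℝ := ∑ j, max |(m j : ℝ)| |(m' j : ℝ)| with hB
      have hB0 : 0 ≤ B := Finset.sum_nonneg fun j _ => le_trans (abs_nonneg _) (le_max_left _ _)
      have hBm'' : (∑ j, |(m'' j : ℝ)|) ≤ B := Finset.sum_le_sum fun j _ => hbox j
      have hBm' : (∑ j, |(m' j : ℝ)|) ≤ B :=
        Finset.sum_le_sum fun j _ => le_max_right _ _
      have hBmax : ∀ j, max |(m j : ℝ)| |(m'' j : ℝ)| ≤ max |(m j : ℝ)| |(m' j : ℝ)| :=
        fun j => max_le (le_max_left _ _) (hbox j)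
      have hsum : ∑ j, m'' j • L j = (∑ j, m' j • L j) + d • L i := by
        have : ∑ j, m'' j • L j = ∑ j, (m' j • L j + (if j = i then d • L i else 0)) := by
          apply Finset.sum_congr rfl
          intro j _
          by_cases hj : j = i
          · rw [hj, hm''i, add_smul, if_pos rfl]
          · rw [hm''j j hj, if_neg hj, add_zero]
        rw [this, Finset.sum_add_distrib, Finset.sum_ite_eq' Finset.univ i fun _ => d • L i]
        simp
      have hstep' : |h (∑ j, m'' j • L j) - h (∑ j, m' j • L j)| ≤ C * B ^ (s - 1) := by
        rcases lt_or_gt_of_ne hi with hlt | hgt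
        · have hdv : d = -1 := by rw [hd, if_neg (by omega)]
          have heq : (∑ j, m' j • L j) = (∑ j, m'' j • L j) + L i := by
            rw [hsum, hdv, neg_one_zsmul]
            abel
          rw [heq, ← abs_neg, neg_sub]
          calc |h ((∑ j, m'' j • L j) + L i) - h (∑ j, m'' j • L j)|
              ≤ C * (∑ j, |(m'' j : ℝ)|) ^ (s - 1) := hstep m'' i
            _ ≤ C * B ^ (s - 1) := by
                apply mul_le_mul_of_nonneg_left _ hC.le
                exact Real.rpow_le_rpow (Finset.sum_nonneg fun j _ => abs_nonneg _) hBm'' hs1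
        · have hdv : d = 1 := by rw [hd, if_pos hgt]
          have heq : (∑ j, m'' j • L j) = (∑ j, m' j • L j) + L i := by
            rw [hsum, hdv, one_smul]
          rw [heq]
          calc |h ((∑ j, m' j • L j) + L i) - h (∑ j, m' j • L j)|
              ≤ C * (∑ j, |(m' j : ℝ)|) ^ (s - 1) := hstep m' i
            _ ≤ C * B ^ (s - 1) := by
                apply mul_le_mul_of_nonneg_left _ hC.le
                exact Real.rpow_le_rpow (Finset.sum_nonneg fun j _ => abs_nonneg _) hBm' hs1
      have hih' : |h (∑ j, m j • L j) - h (∑ j, m'' j • L j)| ≤ C * N * B ^ (s - 1) := by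
        refine le_trans (ih m m'' hNsum) ?_
        apply mul_le_mul_of_nonneg_left _ (by positivity)
        exact Real.rpow_le_rpow
          (Finset.sum_nonneg fun j _ => le_trans (abs_nonneg _) (le_max_left _ _))
          (Finset.sum_le_sum fun j _ => hBmax j) hs1
      calc |h (∑ j, m j • L j) - h (∑ j, m' j • L j)|
          ≤ |h (∑ j, m j • L j) - h (∑ j, m'' j • L j)|
            + |h (∑ j, m'' j • L j) - h (∑ j, m' j • L j)| := abs_sub_le _ _ _
        _ ≤ C * N * B ^ (s - 1) + C * B ^ (s - 1) := add_le_add hih' hstep'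
        _ = C * (N + 1 : ℕ) * B ^ (s - 1) := by push_cast; ring
  intro m m'
  have hcast : ((∑ j, (m j - m' j).natAbs : ℕ) : ℝ) = ∑ j, |(m j : ℝ) - (m' j : ℝ)| := by
    rw [Nat.cast_sum]
    apply Finset.sum_congr rfl
    intro j _
    rw [Nat.cast_natAbs, Int.cast_abs]
    push_cast
    ring_nf
  have hk := key (∑ j, (m j - m' j).natAbs) m m' rfl
  rw [hcast] at hk
  refine le_trans hk ?_
  set A := ∑ j, |(m j : ℝ)| with hA
  set A' := ∑ j, |(m' j : ℝ)| with hA'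
  have hA0 : 0 ≤ A := Finset.sum_nonneg fun j _ => abs_nonneg _
  have hA'0 : 0 ≤ A' := Finset.sum_nonneg fun j _ => abs_nonneg _
  have hBle : (∑ j, max |(m j : ℝ)| |(m' j : ℝ)|) ≤ 2 * max A A' := by
    calc (∑ j, max |(m j : ℝ)| |(m' j : ℝ)|)
        ≤ ∑ j, (|(m j : ℝ)| + |(m' j : ℝ)|) :=
          Finset.sum_le_sum fun j _ =>
            max_le (le_add_of_nonneg_right (abs_nonneg _)) (le_add_of_nonneg_left (abs_nonneg _))
      _ = A + A' := by rw [Finset.sum_add_distrib]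
      _ ≤ 2 * max A A' := by
          rcases le_total A A' with hle | hle
          · rw [max_eq_right hle]; linarith
          · rw [max_eq_left hle]; linarith
  have hB0 : (0:ℝ) ≤ ∑ j, max |(m j : ℝ)| |(m' j : ℝ)| :=
    Finset.sum_nonneg fun j _ => le_trans (abs_nonneg _) (le_max_left _ _)
  have hrp : (∑ j, max |(m j : ℝ)| |(m' j : ℝ)|) ^ (s - 1)
      ≤ 2 ^ (s - 1) * (max A A') ^ (s - 1) := by
    calc (∑ j, max |(m j : ℝ)| |(m' j : ℝ)|) ^ (s - 1)
        ≤ (2 * max A A') ^ (s - 1) := Real.rpow_le_rpow hB0 hBle hs1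
      _ = 2 ^ (s - 1) * (max A A') ^ (s - 1) :=
          Real.mul_rpow (by norm_num) (le_max_of_le_left hA0)
  have hsum0 : 0 ≤ ∑ j, |(m j : ℝ) - (m' j : ℝ)| := Finset.sum_nonneg fun j _ => abs_nonneg _
  calc C * (∑ j, |(m j : ℝ) - (m' j : ℝ)|) * (∑ j, max |(m j : ℝ)| |(m' j : ℝ)|) ^ (s - 1)
      ≤ C * (∑ j, |(m j : ℝ) - (m' j : ℝ)|) * (2 ^ (s - 1) * (max A A') ^ (s - 1)) := by
        apply mul_le_mul_of_nonneg_left hrp (by positivity)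
    _ = C * 2 ^ (s - 1) * (∑ j, |(m j : ℝ) - (m' j : ℝ)|) * (max A A') ^ (s - 1) := by ring
end

section
/- Let f : ℤ^r → ℝ be a function such that for each i = 1, …, r the difference x ↦ f(x) − f(x − e_i) is a polynomial function of x ∈ ℤ^r (where e_i is the i-th standard basis vector). Then f itself is a polynomial function on ℤ^r. -/
/-!
Induct on `r`. A polynomial in `x₀` with coefficients in a `ℚ`-algebra has a polynomial
antidifference (built from Bernoulli polynomials); applied to the difference of `f` in the
direction `e₀`, viewed as a polynomial in `x₀` over `ℝ[x₁, …, x_{r-1}]`, it yields a polynomial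
`s` with the same `e₀`-difference as `f`. Then `f - s` is `e₀`-periodic, so it only depends on
the remaining coordinates, and its restriction to `x₀ = 0` again has polynomial differences.
-/

open Polynomial in
theorem Polynomial.exists_sub_comp_X_sub_one_eq {A : Type*} [CommRing A] [Algebra ℚ A]
    (Q : A[X]) : ∃ S : A[X], S - S.comp (X - 1) = Q := by
  induction Q using Polynomial.induction_on' with
  | add p q hp hq =>
    obtain ⟨Sp, rfl⟩ := hp
    obtain ⟨Sq, rfl⟩ := hq
    exact ⟨Sp + Sq, by rw [add_comp]; ring⟩
  | monomial n a =>
    set B : A[X] := (bernoulli (n + 1)).map (algebraMap ℚ A)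
    have hB : B.comp (1 + X) - B = C (algebraMap ℚ A (n + 1)) * X ^ n := by
      have := congrArg (map (algebraMap ℚ A)) (bernoulli_comp_one_add_X (n + 1))
      rw [map_comp, Polynomial.map_add, Polynomial.map_one, map_X] at this
      rw [this]
      simp [B, nsmul_eq_mul]
    refine ⟨C (a * algebraMap ℚ A (n + 1)⁻¹) * B.comp (1 + X), ?_⟩
    rw [mul_comp, C_comp, comp_assoc, add_comp, one_comp, X_comp, add_sub_cancel, comp_X,
      ← mul_sub, hB, ← mul_assoc, ← C_mul, mul_assoc, ← map_mul,
      inv_mul_cancel₀ (by positivity), map_one, mul_one, C_mul_X_pow_eq_monomial]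

open MvPolynomial

theorem MvPolynomial.eval_bind₁ {R σ τ : Type*} [CommRing R] (g : τ → R)
    (h : σ → MvPolynomial τ R) (φ : MvPolynomial σ R) :
    eval g (bind₁ h φ) = eval (fun i => eval g (h i)) φ :=
  eval₂Hom_bind₁ (RingHom.id R) g h φ

theorem MvPolynomial.eval_intCast_cons_eq_eval_map_finSuccEquiv {R : Type*} [CommRing R]
    {r : ℕ} (M : MvPolynomial (Fin (r + 1)) R) (n : ℤ) (y : Fin r → ℤ) :
    eval (fun j => ((Fin.cons n y : Fin (r + 1) → ℤ) j : R)) M =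
      ((finSuccEquiv R r M).map (eval fun i => (y i : R))).eval (n : R) := by
  have hcast : (fun j => ((Fin.cons n y : Fin (r + 1) → ℤ) j : R)) =
      Fin.cons (n : R) fun i => (y i : R) := by
    funext j
    cases j using Fin.cases <;> simp
  rw [hcast, eval_eq_eval_mv_eval']

theorem Fin.cons_sub_single_zero {r : ℕ} (n : ℤ) (y : Fin r → ℤ) :
    (Fin.cons n y : Fin (r + 1) → ℤ) - Pi.single 0 1 = Fin.cons (n - 1) y := by
  ext j
  cases j using Fin.cases <;> simp

theorem Fin.cons_sub_single_succ {r : ℕ} (n : ℤ) (y : Fin r → ℤ) (i : Fin r) :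
    (Fin.cons n y : Fin (r + 1) → ℤ) - Pi.single i.succ 1 = Fin.cons n (y - Pi.single i 1) := by
  ext j
  cases j using Fin.cases <;> simp [Pi.single_apply]

theorem Fin.apply_eq_apply_cons_zero_tail_of_sub_single_zero {r : ℕ} {M : Type*}
    {g : (Fin (r + 1) → ℤ) → M} (hg : ∀ x, g (x - Pi.single 0 1) = g x)
    (x : Fin (r + 1) → ℤ) : g x = g (Fin.cons 0 (Fin.tail x)) := by
  have hper : Function.Periodic g (Pi.single 0 1) := fun x => by
    rw [← hg (x + _), add_sub_cancel_right]
  have hx : Fin.cons 0 (Fin.tail x) + x 0 • Pi.single 0 1 = x := by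
    ext j
    cases j using Fin.cases <;> simp [Fin.tail]
  rw [← hper.zsmul (x 0) (Fin.cons 0 (Fin.tail x)), hx]

variable {R : Type*} [CommRing R] {σ τ : Type*}

def IsPolynomialFunction (f : (σ → ℤ) → R) : Prop :=
  ∃ P : MvPolynomial σ R, ∀ x, f x = eval (fun j => (x j : R)) P

theorem isPolynomialFunction_const (c : R) : IsPolynomialFunction fun _ : σ → ℤ => c :=
  ⟨C c, fun _ => (eval_C _).symm⟩

theorem isPolynomialFunction_apply (j : σ) : IsPolynomialFunction fun x : σ → ℤ => (x j : R) :=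
  ⟨X j, fun _ => by simp⟩

namespace IsPolynomialFunction

theorem add {f g : (σ → ℤ) → R} (hf : IsPolynomialFunction f) (hg : IsPolynomialFunction g) :
    IsPolynomialFunction fun x => f x + g x := by
  obtain ⟨P, hP⟩ := hf
  obtain ⟨Q, hQ⟩ := hg
  exact ⟨P + Q, fun x => by simp [hP, hQ]⟩

theorem sub {f g : (σ → ℤ) → R} (hf : IsPolynomialFunction f) (hg : IsPolynomialFunction g) :
    IsPolynomialFunction fun x => f x - g x := by
  obtain ⟨P, hP⟩ := hf
  obtain ⟨Q, hQ⟩ := hg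
  exact ⟨P - Q, fun x => by simp [hP, hQ]⟩

theorem comp {f : (τ → ℤ) → R} (hf : IsPolynomialFunction f) {φ : (σ → ℤ) → τ → ℤ}
    (hφ : ∀ j, IsPolynomialFunction fun x => (φ x j : R)) : IsPolynomialFunction (f ∘ φ) := by
  obtain ⟨P, hP⟩ := hf
  choose Q hQ using hφ
  exact ⟨bind₁ Q P, fun x => by simp [hP, eval_bind₁, ← hQ]⟩

theorem comp_sub_const {f : (σ → ℤ) → R} (hf : IsPolynomialFunction f) (v : σ → ℤ) :
    IsPolynomialFunction fun x => f (x - v) :=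
  hf.comp fun j => by
    simpa using (isPolynomialFunction_apply j).sub (isPolynomialFunction_const (v j : R))

theorem comp_cons {r : ℕ} {f : (Fin (r + 1) → ℤ) → R} (hf : IsPolynomialFunction f) (a : ℤ) :
    IsPolynomialFunction fun y : Fin r → ℤ => f (Fin.cons a y) :=
  hf.comp fun j => j.cases (by simpa using isPolynomialFunction_const (a : R)) fun i => by
    simpa using isPolynomialFunction_apply i

theorem comp_tail {r : ℕ} {f : (Fin r → ℤ) → R} (hf : IsPolynomialFunction f) :
    IsPolynomialFunction fun x : Fin (r + 1) → ℤ => f (Fin.tail x) :=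
  hf.comp fun j => isPolynomialFunction_apply j.succ

theorem exists_sub_comp_sub_single_zero_eq [Algebra ℚ R] {r : ℕ}
    {p : (Fin (r + 1) → ℤ) → R} (hp : IsPolynomialFunction p) :
    ∃ s, IsPolynomialFunction s ∧ ∀ x, s x - s (x - Pi.single 0 1) = p x := by
  obtain ⟨P, hP⟩ := hp
  obtain ⟨S, hS⟩ := (finSuccEquiv R r P).exists_sub_comp_X_sub_one_eq
  refine ⟨fun x => eval (fun j => (x j : R)) ((finSuccEquiv R r).symm S), ⟨_, fun _ => rfl⟩,
    fun x => ?_⟩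
  obtain ⟨n, y, rfl⟩ : ∃ n y, x = Fin.cons n y := ⟨x 0, Fin.tail x, (Fin.cons_self_tail x).symm⟩
  have hSy := congrArg (fun Q => (Q.map (eval fun i => (y i : R))).eval (n : R)) hS
  simp only [Polynomial.map_sub, Polynomial.map_comp, Polynomial.map_X, Polynomial.map_one,
    Polynomial.eval_sub, Polynomial.eval_comp, Polynomial.eval_X, Polynomial.eval_one] at hSy
  simp only [Fin.cons_sub_single_zero, hP, eval_intCast_cons_eq_eval_map_finSuccEquiv,
    AlgEquiv.apply_symm_apply]
  push_cast
  exact hSy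

theorem of_sub_comp_sub_single [Algebra ℚ R] : ∀ {r : ℕ} {f : (Fin r → ℤ) → R},
    (∀ i, IsPolynomialFunction fun x => f x - f (x - Pi.single i 1)) → IsPolynomialFunction f
  | 0, f, _ => ⟨C (f 0), fun x => by rw [eval_C, Subsingleton.elim x 0]⟩
  | r + 1, f, hdiff => by
    obtain ⟨s, hs, hsf⟩ := exists_sub_comp_sub_single_zero_eq (hdiff 0)
    set h : (Fin r → ℤ) → R := fun y => f (Fin.cons 0 y) - s (Fin.cons 0 y)
    have hf : ∀ x, f x = s x + h (Fin.tail x) := fun x => by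
      have := Fin.apply_eq_apply_cons_zero_tail_of_sub_single_zero (g := fun x => f x - s x)
        (fun x => by linear_combination hsf x) x
      simp only [h, ← this]
      ring
    have hh : IsPolynomialFunction h := of_sub_comp_sub_single fun i => by
      convert ((hdiff i.succ).sub (hs.sub (hs.comp_sub_const (Pi.single i.succ 1)))).comp_cons 0
        using 2 with y
      simp only [h, Fin.cons_sub_single_succ]
      ring
    simpa only [← hf] using hs.add hh.comp_tail

end IsPolynomialFunction

/-- If `f : ℤ^r → ℝ` is such that for each `i` the difference
`x ↦ f(x) − f(x − eᵢ)` is a polynomial function of `x ∈ ℤ^r` (where `eᵢ` is the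
`i`-th standard basis vector), then `f` itself is a polynomial function on `ℤ^r`,
i.e. there is `P ∈ ℝ[X₁,…,X_r]` with `f(x) = P(x)` for all `x ∈ ℤ^r`. -/
theorem stmt2 {r : ℕ} (f : (Fin r → ℤ) → ℝ)
    (hdiff : ∀ i : Fin r, ∃ P : MvPolynomial (Fin r) ℝ, ∀ x : Fin r → ℤ,
      f x - f (x - Pi.single i 1) = MvPolynomial.eval (fun j => (x j : ℝ)) P) :
    ∃ P : MvPolynomial (Fin r) ℝ, ∀ x : Fin r → ℤ,
      f x = MvPolynomial.eval (fun j => (x j : ℝ)) P :=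
  IsPolynomialFunction.of_sub_comp_sub_single hdiff
end

section
/- Let E be the energy pairing of two continuous semipositive metrics φ₁, φ₂ on a line bundle L over an n-dimensional reduced proper scheme X over a non-Archimedean field, defined by E(L,φ₁,φ₂) = (1/(n+1)) Σ_{j=0}^n ∫ (φ₁−φ₂) (dd^c φ₁)^j ∧ (dd^c φ₂)^{n−j}. Then E satisfies the cocycle rule: E(L,φ₁,φ₂) + E(L,φ₂,φ₃) + E(L,φ₃,φ₁) = 0 for any three continuous semipositive metrics φ₁, φ₂, φ₃ on L. -/
/-!
Write `A p q` and `B p q` for the integrals of `φ₁ - φ₂` and `φ₂ - φ₃` against the mixed measure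
with `p` copies of `φ₁`, `q` copies of `φ₂` and `n - p - q` copies of `φ₃`. Integration by parts
in a single slot gives the closedness relation `A p (q+1) - A p q = B (p+1) q - B p (q+1)` on the
triangle `p + q < n`. Telescoping `A` along the rows of the triangle and `B` along its
antidiagonals turns the three energies into sums that cancel, exactly as in
`(a^(n+1) - b^(n+1)) + (b^(n+1) - c^(n+1)) + (c^(n+1) - a^(n+1)) = 0`.
-/

open Finset Function MeasureTheory

section Telescoping

variable {G : Type*} [AddCommGroup G]

theorem sum_range_antidiagonal_sub (g : ℕ → ℕ → G) (n : ℕ) :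
    ∑ j ∈ range (n + 1), (g (j + 1) (n - j) - g j (n - j + 1)) = g (n + 1) 0 - g 0 (n + 1) := by
  have h : ∀ j ∈ range (n + 1), g (j + 1) (n - j) - g j (n - j + 1) =
      g (j + 1) (n + 1 - (j + 1)) - g j (n + 1 - j) := by
    intro j hj
    rw [Nat.add_sub_add_right, Nat.sub_add_comm (Nat.lt_succ_iff.mp (mem_range.mp hj))]
  rw [sum_congr rfl h, sum_range_sub (fun k => g k (n + 1 - k))]
  simp

theorem sum_range_triangle_sub (g : ℕ → ℕ → G) (n : ℕ) :
    ∑ j ∈ range (n + 1), ∑ q ∈ range (n - j), (g (j + 1) q - g j (q + 1)) =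
      ∑ j ∈ range (n + 1), (g j 0 - g 0 j) := by
  induction n with
  | zero => simp
  | succ n ih =>
    have hrow : ∀ j ∈ range (n + 1),
        ∑ q ∈ range (n + 1 - j), (g (j + 1) q - g j (q + 1)) =
          ∑ q ∈ range (n - j), (g (j + 1) q - g j (q + 1)) +
            (g (j + 1) (n - j) - g j (n - j + 1)) := by
      intro j hj
      rw [Nat.sub_add_comm (Nat.lt_succ_iff.mp (mem_range.mp hj)), sum_range_succ]
    rw [sum_range_succ _ (n + 1), Nat.sub_self, range_zero, sum_empty, add_zero,
      sum_congr rfl hrow, sum_add_distrib, ih, sum_range_antidiagonal_sub,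
      sum_range_succ _ (n + 1)]

end Telescoping

section Cocycle

variable {M G : Type*} [AddGroup G] {d : M → M → G}

theorem cocycle_self (h : ∀ a b c, d a b + d b c = d a c) (a : M) : d a a = 0 :=
  add_eq_left.mp (h a a a)

theorem cocycle_swap (h : ∀ a b c, d a b + d b c = d a c) (a b : M) : d b a = -d a b :=
  eq_neg_of_add_eq_zero_left ((h b a b).trans (cocycle_self h b))

end Cocycle

section Blocks

variable {M : Type*} {n : ℕ} {a b c : M}

def twoBlocks (a b : M) (p : ℕ) (i : Fin n) : M :=
  if (i : ℕ) < p then a else b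

def threeBlocks (a b c : M) (p q : ℕ) (i : Fin n) : M :=
  if (i : ℕ) < p then a else twoBlocks b c (p + q) i

theorem threeBlocks_zero_left (q : ℕ) :
    (threeBlocks a b c 0 q : Fin n → M) = twoBlocks b c q := by
  funext i
  simp [threeBlocks]

theorem threeBlocks_zero_right (p : ℕ) :
    (threeBlocks a b c p 0 : Fin n → M) = twoBlocks a c p := by
  funext i
  simp only [threeBlocks, twoBlocks, add_zero]
  split_ifs <;> rfl

theorem threeBlocks_tsub {p : ℕ} (hp : p ≤ n) :
    (threeBlocks a b c p (n - p) : Fin n → M) = twoBlocks a b p := by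
  funext i
  have := i.isLt
  simp only [threeBlocks, twoBlocks]
  split_ifs <;> first | rfl | omega

theorem twoBlocks_comp_rev {p : ℕ} (hp : p ≤ n) :
    (twoBlocks a b (n - p) : Fin n → M) ∘ Fin.revPerm = twoBlocks b a p := by
  funext i
  simp only [comp_apply, Fin.revPerm_apply, Fin.val_rev, twoBlocks]
  split_ifs <;> first | rfl | omega

variable {p q : ℕ}

theorem update_threeBlocks_third (hpq : p + q < n) :
    update (threeBlocks a b c p q) ⟨p + q, hpq⟩ c = threeBlocks a b c p q :=
  update_eq_self_iff.mpr (by simp [threeBlocks, twoBlocks])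

theorem update_threeBlocks_second (hpq : p + q < n) :
    update (threeBlocks a b c p q) ⟨p + q, hpq⟩ b = threeBlocks a b c p (q + 1) := by
  funext k
  simp only [update_apply, threeBlocks, twoBlocks]
  grind

theorem update_threeBlocks_first (hpq : p + q < n) :
    update (threeBlocks a b c p q) ⟨p + q, hpq⟩ a =
      threeBlocks a b c (p + 1) q ∘ Equiv.swap ⟨p, by omega⟩ ⟨p + q, hpq⟩ := by
  funext k
  simp only [update_apply, comp_apply, Equiv.swap_apply_def, threeBlocks, twoBlocks]
  grind

end Blocks

section Energy

variable {M : Type*} {n : ℕ}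

def IsPermInvariant (I : M → M → (Fin n → M) → ℝ) : Prop :=
  ∀ a b (v : Fin n → M) (σ : Equiv.Perm (Fin n)), I a b (v ∘ σ) = I a b v

def HasIntegrationByParts (I : M → M → (Fin n → M) → ℝ) : Prop :=
  ∀ (i : Fin n) (u₁ u₂ v₁ v₂ : M) (w : Fin n → M),
    I u₁ u₂ (update w i v₁) - I u₁ u₂ (update w i v₂) =
      I v₁ v₂ (update w i u₁) - I v₁ v₂ (update w i u₂)

def energySum (I : M → M → (Fin n → M) → ℝ) (a b : M) : ℝ :=
  ∑ j ∈ range (n + 1), I a b (twoBlocks a b j)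

variable {I : M → M → (Fin n → M) → ℝ}

theorem IsPermInvariant.energySum_eq (hI : IsPermInvariant I) (a b : M) :
    energySum I a b = ∑ j ∈ range (n + 1), I a b (twoBlocks b a j) := by
  rw [energySum, ← sum_range_reflect]
  refine sum_congr rfl fun j hj => ?_
  rw [add_tsub_cancel_right, ← hI a b _ Fin.revPerm,
    twoBlocks_comp_rev (Nat.lt_succ_iff.mp (mem_range.mp hj))]

theorem HasIntegrationByParts.sub_threeBlocks_succ (hparts : HasIntegrationByParts I)
    (hperm : IsPermInvariant I) (a b c : M) {p q : ℕ} (hpq : p + q < n) :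
    I a b (threeBlocks a b c p (q + 1)) - I a b (threeBlocks a b c p q) =
      I b c (threeBlocks a b c (p + 1) q) - I b c (threeBlocks a b c p (q + 1)) := by
  have h := hparts ⟨p + q, hpq⟩ a b b c (threeBlocks a b c p q)
  rwa [update_threeBlocks_second, update_threeBlocks_third, update_threeBlocks_first,
    hperm] at h

theorem energySum_cocycle (hcocycle : ∀ a b c (v : Fin n → M), I a b v + I b c v = I a c v)
    (hperm : IsPermInvariant I) (hparts : HasIntegrationByParts I) (a b c : M) :
    energySum I a b + energySum I b c + energySum I c a = 0 := by
  set A : ℕ → ℕ → ℝ := fun p q => I a b (threeBlocks a b c p q)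
  set B : ℕ → ℕ → ℝ := fun p q => I b c (threeBlocks a b c p q)
  have hab : energySum I a b = ∑ j ∈ range (n + 1), A j (n - j) :=
    sum_congr rfl fun j hj =>
      congrArg (I a b) (threeBlocks_tsub (Nat.lt_succ_iff.mp (mem_range.mp hj))).symm
  have hbc : energySum I b c = ∑ j ∈ range (n + 1), B 0 j :=
    sum_congr rfl fun j _ => congrArg (I b c) (threeBlocks_zero_left j).symm
  have hca : energySum I c a = -∑ j ∈ range (n + 1), (A j 0 + B j 0) := by
    rw [hperm.energySum_eq, ← sum_neg_distrib]
    refine sum_congr rfl fun j _ => ?_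
    rw [cocycle_swap (d := fun x y => I x y _) (fun x y z => hcocycle x y z _), hcocycle,
      threeBlocks_zero_right]
  have hrow : ∀ j ∈ range (n + 1),
      A j (n - j) - A j 0 = ∑ q ∈ range (n - j), (B (j + 1) q - B j (q + 1)) := by
    intro j hj
    rw [← sum_range_sub (A j)]
    refine sum_congr rfl fun q hq => hparts.sub_threeBlocks_succ hperm a b c ?_
    have := mem_range.mp hq
    omega
  have htriangle := sum_range_triangle_sub B n
  rw [← sum_congr rfl hrow, sum_sub_distrib, sum_sub_distrib] at htriangle
  rw [hab, hbc, hca, sum_add_distrib]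
  linarith

end Energy

/-- **Cocycle rule for the energy** (Proposition 2.18(c)).
Abstract setting: `Xan` is the (compact) Berkovich analytification of an
`n`-dimensional reduced proper scheme `X`, `M` is the collection of continuous
semipositive metrics on a line bundle `L` on `X`, `φdiff φ ψ` is the continuous
function `φ − ψ` on `Xan` (so it satisfies the cocycle rule), and
`μ v = dd^cv₁ ∧ ⋯ ∧ dd^cv_n` are the mixed Chambert-Loir (Monge–Ampère)
measures: positive Radon measures, symmetric in the metrics, and satisfying the
integration-by-parts symmetry `∫ f dd^c g ∧ T = ∫ g dd^c f ∧ T` (here stated in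
polarized form `hparts`).  The energy is
`E(φ,ψ) = (1/(n+1)) Σ_{j=0}^n ∫ (φ−ψ) (dd^cφ)^j ∧ (dd^cψ)^{n−j}`.
Then `E(φ₁,φ₂) + E(φ₂,φ₃) + E(φ₃,φ₁) = 0` for any three continuous semipositive
metrics `φ₁, φ₂, φ₃` on `L`. -/
theorem stmt8 {Xan M : Type} [TopologicalSpace Xan] [CompactSpace Xan]
    [MeasurableSpace Xan] [BorelSpace Xan]
    (n : ℕ)
    (φdiff : M → M → C(Xan, ℝ))
    (hcocycle : ∀ a b c : M, φdiff a b + φdiff b c = φdiff a c)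
    (μ : (Fin n → M) → Measure Xan)
    (hfin : ∀ v, IsFiniteMeasure (μ v))
    (hsymm : ∀ (v : Fin n → M) (σ : Equiv.Perm (Fin n)), μ (v ∘ σ) = μ v)
    (hparts : ∀ (i : Fin n) (u₁ u₂ v₁ v₂ : M) (w : Fin n → M),
      ((∫ x, φdiff u₁ u₂ x ∂ μ (Function.update w i v₁)) -
        ∫ x, φdiff u₁ u₂ x ∂ μ (Function.update w i v₂)) =
      ((∫ x, φdiff v₁ v₂ x ∂ μ (Function.update w i u₁)) -
        ∫ x, φdiff v₁ v₂ x ∂ μ (Function.update w i u₂)))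
    (E : M → M → ℝ)
    (hE : ∀ φ ψ : M, E φ ψ = (1 / (n + 1 : ℝ)) *
      ∑ j ∈ Finset.range (n + 1),
        ∫ x, φdiff φ ψ x ∂ μ (fun i => if (i : ℕ) < j then φ else ψ))
    (φ₁ φ₂ φ₃ : M) :
    E φ₁ φ₂ + E φ₂ φ₃ + E φ₃ φ₁ = 0 := by
  have hintegrable (a b : M) (v : Fin n → M) : Integrable (φdiff a b) (μ v) :=
    have := hfin v
    (φdiff a b).continuous.integrable_of_hasCompactSupport (.of_compactSpace _)
  have hcocycle_integral (a b c : M) (v : Fin n → M) :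
      ∫ x, φdiff a b x ∂μ v + ∫ x, φdiff b c x ∂μ v = ∫ x, φdiff a c x ∂μ v := by
    rw [← integral_add (hintegrable a b v) (hintegrable b c v), ← hcocycle a b c]
    rfl
  have hperm : IsPermInvariant fun a b v => ∫ x, φdiff a b x ∂μ v :=
    fun a b v σ => by simp only [hsymm]
  have h := energySum_cocycle hcocycle_integral hperm hparts φ₁ φ₂ φ₃
  unfold energySum twoBlocks at h
  rw [hE, hE, hE, ← mul_add, ← mul_add, h, mul_zero]
end

section
/- Let μ_φ and μ_ψ be the Monge–Ampère measures (dd^cφ)^n, (dd^cψ)^n of two continuous semipositive metrics φ, ψ on a line bundle L over an n-dimensional proper scheme X over a non-Archimedean field. Then the comparison principle holds: ∫_{\{φ<ψ\}} (dd^cφ)^n ≥ ∫_{\{φ<ψ\}} (dd^cψ)^n, where {φ<ψ} = {x ∈ X^an : φ(x) < ψ(x)}. -/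
/-!
For `ε > 0` put `m = max(φ + ε, ψ)`. By locality `μ m` agrees with `μ ψ` on the open set
`A = {φ − ψ < −ε}`, where `m = ψ`, and with `μ (φ + ε) = μ φ` on the open set
`B = {φ − ψ > −ε}`, where `m = φ + ε`. As `A` and `B` are disjoint and all Monge–Ampère
measures have the same finite total mass, `μ ψ A + μ φ B ≤ μ m X = μ φ B + μ φ Bᶜ`, hence
`μ ψ {φ − ψ < −ε} ≤ μ φ {φ − ψ ≤ −ε} ≤ μ φ {φ < ψ}`. Letting `ε → 0` gives the claim.
-/

open MeasureTheory

section Cocycle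

variable {M G : Type*} [AddGroup G] {d : M → M → G}

theorem cocycle_self_eq_zero (hd : ∀ a b c, d a b + d b c = d a c) (a : M) : d a a = 0 :=
  add_eq_left.mp (hd a a a)

theorem cocycle_swap_eq_neg (hd : ∀ a b c, d a b + d b c = d a c) (a b : M) :
    d b a = -d a b :=
  eq_neg_of_add_eq_zero_right ((hd a b a).trans (cocycle_self_eq_zero hd a))

end Cocycle

section Measure

variable {X : Type*} [MeasurableSpace X]

theorem measure_le_measure_compl_of_eq_on_disjoint {ν μ₁ μ₂ : Measure X} {A B : Set X}
    (hAB : Disjoint A B) (hB : MeasurableSet B) (hμ₂B : μ₂ B ≠ ⊤)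
    (hνA : ν A = μ₁ A) (hνB : ν B = μ₂ B) (hmass : ν Set.univ = μ₂ Set.univ) :
    μ₁ A ≤ μ₂ Bᶜ := by
  refine (ENNReal.add_le_add_iff_right hμ₂B).mp ?_
  calc μ₁ A + μ₂ B = ν (A ∪ B) := by rw [measure_union hAB hB, hνA, hνB]
    _ ≤ ν Set.univ := measure_mono (Set.subset_univ _)
    _ = μ₂ Bᶜ + μ₂ B := by rw [hmass, add_comm, measure_add_measure_compl hB]

theorem measure_setOf_neg_le_of_forall_pos (ν : Measure X) (g : X → ℝ) {c : ENNReal}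
    (h : ∀ ε > 0, ν {x | g x < -ε} ≤ c) : ν {x | g x < 0} ≤ c := by
  have hunion : {x | g x < 0} = ⋃ n : ℕ, {x | g x < -(1 / (n + 1 : ℝ))} := by
    ext x
    simp only [Set.mem_ofPred_eq, Set.mem_iUnion]
    constructor
    · intro hx
      obtain ⟨n, hn⟩ := exists_nat_one_div_lt (neg_pos.mpr hx)
      exact ⟨n, by linarith⟩
    · rintro ⟨n, hn⟩
      linarith [Nat.one_div_pos_of_nat (α := ℝ) (n := n)]
  have hmono : Monotone fun n : ℕ => {x | g x < -(1 / (n + 1 : ℝ))} := by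
    intro a b hab x (hx : g x < _)
    show g x < _
    linarith [Nat.one_div_le_one_div (α := ℝ) hab]
  rw [hunion, hmono.measure_iUnion]
  exact iSup_le fun n => h _ Nat.one_div_pos_of_nat

end Measure

theorem monge_ampere_setOf_lt_neg_le {X M : Type*} [TopologicalSpace X] [MeasurableSpace X]
    [OpensMeasurableSpace X] {degL : ENNReal} (hdegL : degL ≠ ⊤)
    {φdiff : M → M → C(X, ℝ)} (hcocycle : ∀ a b c : M, φdiff a b + φdiff b c = φdiff a c)
    {μ : M → Measure X} (hmass : ∀ φ, μ φ Set.univ = degL)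
    {mx : M → M → M} (hmx : ∀ φ ψ χ : M, φdiff (mx φ ψ) χ = (φdiff φ χ) ⊔ (φdiff ψ χ))
    {shift : M → ℝ → M}
    (hshiftdiff : ∀ (φ : M) (c : ℝ) (ψ : M),
      φdiff (shift φ c) ψ = ContinuousMap.const X c + φdiff φ ψ)
    (hshiftμ : ∀ (φ : M) (c : ℝ), μ (shift φ c) = μ φ)
    (hlocal : ∀ (φ ψ : M) (U : Set X), IsOpen U → (∀ x ∈ U, φdiff φ ψ x = 0) →
      ∀ s : Set X, s ⊆ U → MeasurableSet s → μ φ s = μ ψ s)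
    (φ ψ : M) {ε : ℝ} (hε : 0 < ε) :
    μ ψ {x | φdiff φ ψ x < -ε} ≤ μ φ {x | φdiff φ ψ x < 0} := by
  set f := φdiff φ ψ
  set m := mx (shift φ ε) ψ
  have hA : IsOpen {x | f x < -ε} := isOpen_lt f.continuous continuous_const
  have hB : IsOpen {x | -ε < f x} := isOpen_lt continuous_const f.continuous
  have hm_eq_ψ : μ m {x | f x < -ε} = μ ψ {x | f x < -ε} := by
    refine hlocal m ψ _ hA (fun x (hx : f x < -ε) => ?_) _ subset_rfl hA.measurableSet
    have : ε + f x < 0 := by linarith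
    simp [m, hmx, hshiftdiff, cocycle_self_eq_zero hcocycle, this.le, f]
  have hm_eq_φ : μ m {x | -ε < f x} = μ φ {x | -ε < f x} := by
    rw [← hshiftμ φ ε]
    refine hlocal m _ _ hB (fun x (hx : -ε < f x) => ?_) _ subset_rfl hB.measurableSet
    have : -(ε + f x) ≤ 0 := by linarith
    rw [hmx, cocycle_self_eq_zero hcocycle, cocycle_swap_eq_neg hcocycle (shift φ ε), hshiftdiff]
    simpa [f] using this
  have hfin : μ φ {x | -ε < f x} ≠ ⊤ :=
    ne_top_of_le_ne_top (hmass φ ▸ hdegL) (measure_mono (Set.subset_univ _))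
  have hdisj : Disjoint {x | f x < -ε} {x | -ε < f x} :=
    Set.disjoint_left.mpr fun x (h₁ : f x < -ε) (h₂ : -ε < f x) => lt_asymm h₁ h₂
  refine (measure_le_measure_compl_of_eq_on_disjoint hdisj hB.measurableSet hfin
    hm_eq_ψ hm_eq_φ ((hmass m).trans (hmass φ).symm)).trans (measure_mono ?_)
  intro x (hx : ¬ -ε < f x)
  show f x < 0
  linarith [not_lt.mp hx]

theorem stmt11_general {Xan M : Type} [TopologicalSpace Xan]
    [MeasurableSpace Xan] [BorelSpace Xan]
    (degL : ENNReal) (hdegL : degL ≠ ⊤)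
    (φdiff : M → M → C(Xan, ℝ))
    (hcocycle : ∀ a b c : M, φdiff a b + φdiff b c = φdiff a c)
    (μ : M → Measure Xan)
    (hmass : ∀ φ, μ φ Set.univ = degL)
    (mx : M → M → M)
    (hmx : ∀ φ ψ χ : M, φdiff (mx φ ψ) χ = (φdiff φ χ) ⊔ (φdiff ψ χ))
    (shift : M → ℝ → M)
    (hshiftdiff : ∀ (φ : M) (c : ℝ) (ψ : M),
      φdiff (shift φ c) ψ = ContinuousMap.const Xan c + φdiff φ ψ)
    (hshiftμ : ∀ (φ : M) (c : ℝ), μ (shift φ c) = μ φ)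
    (hlocal : ∀ (φ ψ : M) (U : Set Xan), IsOpen U → (∀ x ∈ U, φdiff φ ψ x = 0) →
      ∀ s : Set Xan, s ⊆ U → MeasurableSet s → μ φ s = μ ψ s)
    (φ ψ : M) :
    μ ψ {x : Xan | φdiff φ ψ x < 0} ≤ μ φ {x : Xan | φdiff φ ψ x < 0} :=
  measure_setOf_neg_le_of_forall_pos (μ ψ) (φdiff φ ψ) fun _ hε =>
    monge_ampere_setOf_lt_neg_le hdegL hcocycle hmass hmx hshiftdiff hshiftμ hlocal φ ψ hε

/-- **Comparison principle for Monge–Ampère measures** (Proposition 2.15).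
Abstract setting: `Xan` is the compact Berkovich analytification of an
`n`-dimensional proper scheme, `M` is the collection of continuous semipositive
metrics on a line bundle `L`, and `φdiff φ ψ` is the continuous function
`φ − ψ` on `Xan`.  The Monge–Ampère measures `μ φ = (dd^cφ)^n` are positive
Radon measures of total mass `deg_L(X)`; the maximum `mx φ ψ` of two continuous
semipositive metrics is again one (with `(mx φ ψ) − χ = max(φ−χ, ψ−χ)`
pointwise); constant shifts `shift φ ε` satisfy `(φ+ε) − ψ = ε + (φ−ψ)` and
`(dd^c(φ+ε))^n = (dd^cφ)^n`; and the formation of the Monge–Ampère measure is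
local in the Berkovich topology: if `φ − ψ` vanishes on an open set `U`, then
`μ φ` and `μ ψ` agree on Borel subsets of `U`.
Then `∫_{\{φ<ψ\}} (dd^cφ)^n ≥ ∫_{\{φ<ψ\}} (dd^cψ)^n`, where
`{φ<ψ} = {x : φ(x) < ψ(x)}`. -/
theorem stmt11 {Xan M : Type} [TopologicalSpace Xan] [CompactSpace Xan]
    [MeasurableSpace Xan] [BorelSpace Xan]
    (degL : ENNReal) (hdegL : degL ≠ ⊤)
    (φdiff : M → M → C(Xan, ℝ))
    (hcocycle : ∀ a b c : M, φdiff a b + φdiff b c = φdiff a c)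
    (μ : M → Measure Xan)
    (hmass : ∀ φ, μ φ Set.univ = degL)
    (mx : M → M → M)
    (hmx : ∀ φ ψ χ : M, φdiff (mx φ ψ) χ = (φdiff φ χ) ⊔ (φdiff ψ χ))
    (shift : M → ℝ → M)
    (hshiftdiff : ∀ (φ : M) (c : ℝ) (ψ : M),
      φdiff (shift φ c) ψ = ContinuousMap.const Xan c + φdiff φ ψ)
    (hshiftμ : ∀ (φ : M) (c : ℝ), μ (shift φ c) = μ φ)
    (hlocal : ∀ (φ ψ : M) (U : Set Xan), IsOpen U → (∀ x ∈ U, φdiff φ ψ x = 0) →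
      ∀ s : Set Xan, s ⊆ U → MeasurableSet s → μ φ s = μ ψ s)
    (φ ψ : M) :
    μ ψ {x : Xan | φdiff φ ψ x < 0} ≤ μ φ {x : Xan | φdiff φ ψ x < 0} :=
  stmt11_general degL hdegL φdiff hcocycle μ hmass mx hmx shift hshiftdiff hshiftμ hlocal φ ψ
end

section
/- Let L be a line bundle on a reduced proper scheme X over a non-Archimedean field admitting a semipositive model metric, and let ψ be a bounded metric on L^an with semipositive envelope Env(ψ). Then the supremum seminorms on H⁰(X,L) agree: ‖s‖_{Env(ψ)} = ‖s‖_ψ for all global sections s of L. -/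
open scoped NNReal

/-- **The envelope does not change supremum seminorms** (Proposition 6.6(a)).
Abstract setting: `Xan` is the compact Berkovich analytification of a reduced
proper scheme over a non-Archimedean field and `L` a line bundle admitting a
semipositive model metric.  Metrics on `L^an` are written additively relative
to a fixed reference metric, so that bounded metrics correspond to bounded
functions `Xan → ℝ` and continuous semipositive metrics correspond to a
nonempty set `S ⊆ C(Xan, ℝ)` stable under adding constants.  A global section
`s ∈ H⁰(X,L)` is recorded through its pointwise norm `u = |s(·)|` in the
reference metric, so that `|s(x)|_φ = u(x)·exp(−φ(x))` for a metric `φ` and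
`‖s‖_φ = sup_x u(x)e^{−φ(x)}`.  The hypothesis `hmax` encodes Lemma 6.1.3 of
BGJKM: for a (rescaled) bounded metric `ψ + c` dominating the singular metric
`ψ_s` (i.e. `u ≤ e^{ψ+c}`) and any continuous semipositive `φ₁ ≤ ψ + c`, the
pointwise maximum `max(φ₁, ψ_s)` — characterized by
`e^{φ'} = max(e^{φ₁}, u)` — is again a continuous semipositive metric `≤ ψ+c`.
`Env` is the semipositive envelope of the bounded metric `ψ`.
Conclusion: the supremum seminorms agree, `‖s‖_{Env(ψ)} = ‖s‖_ψ`. -/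
theorem stmt13 {Xan : Type} [TopologicalSpace Xan] [CompactSpace Xan]
    (S : Set C(Xan, ℝ)) (hS : S.Nonempty)
    (hshift : ∀ φ ∈ S, ∀ c : ℝ, φ + ContinuousMap.const Xan c ∈ S)
    (ψ : Xan → ℝ) (hψ : ∃ C : ℝ, ∀ x, |ψ x| ≤ C)
    (Env : Xan → ℝ)
    (hEnv : ∀ x : Xan,
      Env x = ⨆ φ : {φ : C(Xan, ℝ) // φ ∈ S ∧ ∀ y, φ y ≤ ψ y}, (φ : C(Xan, ℝ)) x)
    (u : C(Xan, ℝ≥0))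
    (hmax : ∀ c : ℝ, (∀ x, (u x : ℝ) ≤ Real.exp (ψ x + c)) →
      ∀ φ₁ ∈ S, (∀ x, φ₁ x ≤ ψ x + c) →
        ∃ φ' ∈ S, ∀ x, φ₁ x ≤ φ' x ∧ φ' x ≤ ψ x + c ∧
          Real.exp (φ' x) = max (Real.exp (φ₁ x)) (u x : ℝ)) :
    (⨆ x : Xan, (u x : ℝ) * Real.exp (-(Env x)))
      = ⨆ x : Xan, (u x : ℝ) * Real.exp (-(ψ x)) := by

  rcases isEmpty_or_nonempty Xan with hE | hNE
  · simp only [iSup, Set.range_eq_empty, Real.sSup_empty]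
  obtain ⟨C, hC⟩ := hψ
  obtain ⟨φ₀, hφ₀⟩ := hS
  obtain ⟨K, hK⟩ : BddAbove (Set.range φ₀) := (isCompact_range φ₀.continuous).bddAbove
  have hK' : ∀ x, φ₀ x ≤ K := fun x => hK ⟨x, rfl⟩
  set φmin : C(Xan, ℝ) := φ₀ + ContinuousMap.const Xan (-(K + C)) with hφmin
  have hφminS : φmin ∈ S := hshift φ₀ hφ₀ _
  have hφminle : ∀ x, φmin x ≤ ψ x := by
    intro x
    have h1 : -C ≤ ψ x := neg_le_of_abs_le (hC x)
    have : φmin x = φ₀ x - (K + C) := by simp [hφmin]; ring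
    rw [this]; linarith [hK' x]
  haveI hA : Nonempty {φ : C(Xan, ℝ) // φ ∈ S ∧ ∀ y, φ y ≤ ψ y} :=
    ⟨⟨φmin, hφminS, hφminle⟩⟩
  have hbdd : ∀ x : Xan, BddAbove (Set.range fun φ : {φ : C(Xan, ℝ) // φ ∈ S ∧ ∀ y, φ y ≤ ψ y} => (φ : C(Xan, ℝ)) x) := by
    intro x
    exact ⟨ψ x, by rintro _ ⟨φ, rfl⟩; exact φ.2.2 x⟩
  have hEnvle : ∀ x, Env x ≤ ψ x := by
    intro x
    rw [hEnv x]
    exact ciSup_le fun φ => φ.2.2 x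
  have hEnvge : ∀ (φ : C(Xan, ℝ)), φ ∈ S → (∀ y, φ y ≤ ψ y) → ∀ x, φ x ≤ Env x := by
    intro φ hφS hφle x
    rw [hEnv x]
    exact le_ciSup_of_le (hbdd x) ⟨φ, hφS, hφle⟩ le_rfl
  -- boundedness of u
  obtain ⟨U, hU⟩ : BddAbove (Set.range fun x => (u x : ℝ)) :=
    (isCompact_range (continuous_subtype_val.comp u.continuous)).bddAbove
  have hU' : ∀ x, (u x : ℝ) ≤ U := fun x => hU ⟨x, rfl⟩
  set M := ⨆ x : Xan, (u x : ℝ) * Real.exp (-(ψ x)) with hM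
  have hRbdd : BddAbove (Set.range fun x : Xan => (u x : ℝ) * Real.exp (-(ψ x))) := by
    refine ⟨U * Real.exp C, ?_⟩
    rintro _ ⟨x, rfl⟩
    have h1 : Real.exp (-(ψ x)) ≤ Real.exp C :=
      Real.exp_le_exp.2 (by linarith [neg_le_of_abs_le (hC x), le_of_abs_le (hC x), (abs_le.1 (hC x)).1])
    exact mul_le_mul (hU' x) h1 (Real.exp_pos _).le ((u x).2.trans (hU' x))
  have hle_M : ∀ x, (u x : ℝ) * Real.exp (-(ψ x)) ≤ M := fun x => le_ciSup hRbdd x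
  haveI := hNE
  obtain ⟨x₀⟩ := hNE
  have hM0 : 0 ≤ M := le_trans (mul_nonneg (u x₀).2 (Real.exp_pos _).le) (hle_M x₀)
  -- key claim
  have key : ∀ x, (u x : ℝ) * Real.exp (-(Env x)) ≤ M := by
    intro x
    rcases eq_or_lt_of_le hM0 with hM0' | hMpos
    · have hux : (u x : ℝ) = 0 := by
        have h1 := hle_M x
        have h2 : 0 ≤ (u x : ℝ) * Real.exp (-(ψ x)) := mul_nonneg (u x).2 (Real.exp_pos _).le
        have h3 : (u x : ℝ) * Real.exp (-(ψ x)) = 0 := le_antisymm (h1.trans hM0'.symm.le) h2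
        exact (mul_eq_zero.1 h3).resolve_right (Real.exp_ne_zero _)
      rw [hux, zero_mul]; exact hM0
    · set c := Real.log M with hc
      have hMc : Real.exp c = M := Real.exp_log hMpos
      have hudom : ∀ y, (u y : ℝ) ≤ Real.exp (ψ y + c) := by
        intro y
        have h1 := hle_M y
        have h2 : (u y : ℝ) ≤ M * Real.exp (ψ y) := by
          have := mul_le_mul_of_nonneg_right h1 (Real.exp_pos (ψ y)).le
          rwa [mul_assoc, ← Real.exp_add, neg_add_cancel, Real.exp_zero, mul_one] at this
        rw [Real.exp_add, hMc, mul_comm]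
        exact h2
      set φ₁ : C(Xan, ℝ) := φmin + ContinuousMap.const Xan (min c 0) with hφ₁
      have hφ₁S : φ₁ ∈ S := hshift φmin hφminS _
      have hφ₁le : ∀ y, φ₁ y ≤ ψ y + c := by
        intro y
        have : φ₁ y = φmin y + min c 0 := by simp [hφ₁]
        rw [this]
        have := hφminle y
        have := min_le_left c 0
        linarith
      obtain ⟨φ', hφ'S, hφ'⟩ := hmax c hudom φ₁ hφ₁S hφ₁le
      have hφ''S : φ' + ContinuousMap.const Xan (-c) ∈ S := hshift φ' hφ'S _
      have hφ''le : ∀ y, (φ' + ContinuousMap.const Xan (-c)) y ≤ ψ y := by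
        intro y
        have := (hφ' y).2.1
        simp only [ContinuousMap.add_apply, ContinuousMap.const_apply]
        linarith
      have hφ''Env : φ' x + (-c) ≤ Env x := by
        have := hEnvge _ hφ''S hφ''le x
        simpa using this
      have hu_le : (u x : ℝ) ≤ Real.exp (φ' x) := by
        rw [(hφ' x).2.2]; exact le_max_right _ _
      have h1 : (u x : ℝ) ≤ Real.exp (Env x + c) := by
        refine hu_le.trans (Real.exp_le_exp.2 ?_)
        linarith
      have h2 : Real.exp (Env x + c) = Real.exp (Env x) * M := by
        rw [Real.exp_add, hMc]
      calc (u x : ℝ) * Real.exp (-(Env x)) ≤ Real.exp (Env x + c) * Real.exp (-(Env x)) :=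
            mul_le_mul_of_nonneg_right h1 (Real.exp_pos _).le
        _ = M := by rw [h2, mul_comm (Real.exp (Env x)) M, mul_assoc, ← Real.exp_add,
              add_neg_cancel, Real.exp_zero, mul_one]
  have hLbdd : BddAbove (Set.range fun x : Xan => (u x : ℝ) * Real.exp (-(Env x))) :=
    ⟨M, by rintro _ ⟨x, rfl⟩; exact key x⟩
  refine le_antisymm (ciSup_le key) (ciSup_le fun x => ?_)
  calc (u x : ℝ) * Real.exp (-(ψ x)) ≤ (u x : ℝ) * Real.exp (-(Env x)) := by
        apply mul_le_mul_of_nonneg_left (Real.exp_le_exp.2 (by linarith [hEnvle x])) (u x).2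
    _ ≤ ⨆ x : Xan, (u x : ℝ) * Real.exp (-(Env x)) := le_ciSup hLbdd x
end
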